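/- arXiv:2503.08004 — 2 statements merged into one kernel-verified Lean document; each statement's English description precedes it below -/
import Mathlib

section
/- Under the 'good event' that all confidence intervals are valid, if an arm a_t is pulled by the UCB rule (i.e., UCB_{a_t}(t) ≥ UCB_{a*_t}(t) where a*_t is the active arm whose ball of radius ε_{a*_t}(t)/L covers the optimal arm a*), then the suboptimality gap satisfies Δ_{a_t} = μ* - μ_{a_t} ≤ 3·ε_{a_t}(t). Concretely: let μ : X → ℝ be L-Lipschitz on a metric space X, and suppose for arms a, b ∈ X and positive reals ε_a, ε_b and estimates μ̂_a, μ̂_b we have |μ̂_a - μ_a| ≤ ε_a, |μ̂_b - μ_b| ≤ ε_b, d(b, a*) ≤ ε_b/L for an optimal arm a* (μ(a*) = μ* = sup μ), and μ̂_a + ε_a ≥ μ̂_b + ε_b. Then μ* - μ_a ≤ 3ε_a. -/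
/-! Lipschitz continuity and the covering radius give `μ a* ≤ μ b + ε_b`; the confidence
intervals turn the UCB comparison into `μ b + ε_b ≤ μ a + 2 ε_a`, so the gap is even at most
`2 ε_a`. -/

lemma le_add_of_dist_le_div {X : Type*} [PseudoMetricSpace X] {L : ℝ} (hL : 0 < L)
    {f : X → ℝ} (hf : ∀ x y : X, |f x - f y| ≤ L * dist x y) {x y : X} {r : ℝ}
    (hxy : dist x y ≤ r / L) : f y ≤ f x + r := by
  have hfr : |f x - f y| ≤ r :=
    calc |f x - f y| ≤ L * dist x y := hf x y
      _ ≤ L * (r / L) := by gcongr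
      _ = r := mul_div_cancel₀ r hL.ne'
  linarith [neg_abs_le (f x - f y)]

theorem stmt_5_general {X : Type*} [MetricSpace X] (L : ℝ) (hL : 0 < L)
    (μ : X → ℝ) (hμ : ∀ x y : X, |μ x - μ y| ≤ L * dist x y)
    (a b astar : X) (μhata μhatb εa εb : ℝ) (hεa : 0 < εa)
    (hconfa : |μhata - μ a| ≤ εa)
    (hconfb : |μhatb - μ b| ≤ εb)
    (hcover : dist b astar ≤ εb / L)
    (hUCB : μhatb + 2 * εb ≤ μhata + εa) :
    μ astar - μ a ≤ 3 * εa := by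
  have hastar : μ astar ≤ μ b + εb := le_add_of_dist_le_div hL hμ hcover
  obtain ⟨hb, -⟩ := abs_le.mp hconfb
  obtain ⟨-, ha⟩ := abs_le.mp hconfa
  linarith

/-- Under valid confidence intervals, if the pulled arm's UCB dominates the
UCB (with doubled width) of the active arm covering the optimum, its gap is at most 3ε_a. -/
theorem stmt_5 {X : Type*} [MetricSpace X] (L : ℝ) (hL : 0 < L)
    (μ : X → ℝ) (hμ : ∀ x y : X, |μ x - μ y| ≤ L * dist x y)
    (a b astar : X) (μhata μhatb εa εb : ℝ) (hεa : 0 < εa) (hεb : 0 < εb)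
    (hopt : ∀ x : X, μ x ≤ μ astar)
    (hconfa : |μhata - μ a| ≤ εa)
    (hconfb : |μhatb - μ b| ≤ εb)
    (hcover : dist b astar ≤ εb / L)
    (hUCB : μhatb + 2 * εb ≤ μhata + εa) :
    μ astar - μ a ≤ 3 * εa :=
  stmt_5_general L hL μ hμ a b astar μhata μhatb εa εb hεa hconfa hconfb hcover hUCB
end

section
/- Let d ≥ 1, c > 0, and suppose for each r = 2^{-i} (i ∈ ℕ) the sets Y_i satisfy Σ_{a ∈ Y_i} Δ_a·n_a ≤ (C log T / r)·(c/(r/3)^d) where C is a constant, arms in Y_i have gaps in [r, 2r). Then for any δ ∈ (0,1), the total regret satisfies R(T) ≤ δT + Σ_{i : 2^{-i} > δ} (C log T/2^{-i})·c·3^d·2^{id} ≤ δT + C'·c·log T·(1/δ)^{d+1} for a constant C' depending on C and d. -/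
open Finset

/-- Summing the zooming per-scale regret bounds over scales r = 2^{-i} > δ
gives total regret at most δT + C'·c·log T·(1/δ)^{d+1}. -/
theorem stmt_14 {ι : Type*} (d : ℕ) (hd : 1 ≤ d) (c C T : ℝ) (hc : 0 < c) (hC : 0 < C)
    (hT : 2 ≤ T) (Y : ℕ → Finset ι) (Δ n : ι → ℝ)
    (hΔ : ∀ i : ℕ, ∀ a ∈ Y i, (2 : ℝ) ^ (-(i : ℤ)) ≤ Δ a ∧ Δ a < 2 * (2 : ℝ) ^ (-(i : ℤ)))
    (hn : ∀ a, 0 ≤ n a)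
    (hY : ∀ i : ℕ, ∑ a ∈ Y i, Δ a * n a ≤
      (C * Real.log T / (2 : ℝ) ^ (-(i : ℤ))) * (c / ((2 : ℝ) ^ (-(i : ℤ)) / 3) ^ d)) :
    ∃ C' : ℝ, 0 < C' ∧
      ∀ δ : ℝ, 0 < δ → δ < 1 → ∀ M : ℕ, (∀ i < M, δ < (2 : ℝ) ^ (-(i : ℤ))) →
        ∀ R : ℝ, R ≤ δ * T + ∑ i ∈ Finset.range M, ∑ a ∈ Y i, Δ a * n a →
          R ≤ δ * T + C' * c * Real.log T * (1 / δ) ^ (d + 1) := by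
  refine ⟨C * 3 ^ d * 2 ^ (d + 1), by positivity, ?_⟩
  intro δ hδ hδ1 M hM R hR
  have hlog : 0 < Real.log T := Real.log_pos (by linarith)
  -- per-scale bound
  have h1 : ∀ i : ℕ, ∑ a ∈ Y i, Δ a * n a ≤
      C * Real.log T * c * 3 ^ d * ((2 : ℝ) ^ (d + 1)) ^ i := by
    intro i
    refine (hY i).trans_eq ?_
    have h2 : ((2 : ℝ)) ^ (-(i : ℤ)) = ((2 : ℝ) ^ i)⁻¹ := by
      rw [zpow_neg, zpow_natCast]
    rw [h2]
    have h2i : ((2 : ℝ) ^ i) ≠ 0 := by positivity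
    field_simp
    simp only [inv_pow, one_div]; field_simp
    ring
  have hsum : ∑ i ∈ Finset.range M, ∑ a ∈ Y i, Δ a * n a ≤
      C * Real.log T * c * 3 ^ d * ∑ i ∈ Finset.range M, ((2 : ℝ) ^ (d + 1)) ^ i := by
    rw [Finset.mul_sum]
    exact Finset.sum_le_sum fun i _ => h1 i
  -- geometric sum bound
  have hgeom : ∀ N : ℕ, ∑ i ∈ Finset.range N, ((2 : ℝ) ^ (d + 1)) ^ i ≤
      ((2 : ℝ) ^ (d + 1)) ^ N := by
    intro N
    set x : ℝ := (2 : ℝ) ^ (d + 1) with hxdef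
    have hx : (2 : ℝ) ≤ x := by
      calc (2:ℝ) = 2 ^ 1 := (pow_one 2).symm
      _ ≤ 2 ^ (d + 1) := by
        apply pow_le_pow_right₀ (by norm_num) (by omega)
    induction N with
    | zero => simp
    | succ m ih =>
      rw [Finset.sum_range_succ, pow_succ]
      have hxm : (0:ℝ) < x ^ m := by positivity
      nlinarith
  -- bound (2^(d+1))^M by 2^(d+1) * (1/δ)^(d+1)
  have hM2 : ((2 : ℝ) ^ (d + 1)) ^ M ≤ 2 ^ (d + 1) * (1 / δ) ^ (d + 1) := by
    cases M with
    | zero =>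
      simp only [pow_zero]
      have h1δ : (1 : ℝ) ≤ 1 / δ := by
        rw [le_div_iff₀ hδ]; linarith
      have h2 : (1 : ℝ) ≤ (1 / δ) ^ (d + 1) := one_le_pow₀ h1δ
      nlinarith [one_le_pow₀ (by norm_num : (1:ℝ) ≤ 2) (n := d+1)]
    | succ m =>
      have hδm := hM m (Nat.lt_succ_self m)
      have h2 : ((2 : ℝ)) ^ (-(m : ℤ)) = ((2 : ℝ) ^ m)⁻¹ := by
        rw [zpow_neg, zpow_natCast]
      rw [h2] at hδm
      have h2m : (0:ℝ) < 2 ^ m := by positivity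
      have key : (2 : ℝ) ^ (m + 1) ≤ 2 / δ := by
        rw [le_div_iff₀ hδ, pow_succ]
        have : δ * 2 ^ m < 1 := (lt_div_iff₀ h2m).mp (by simpa [one_div] using hδm)
        nlinarith
      calc ((2 : ℝ) ^ (d + 1)) ^ (m + 1) = ((2 : ℝ) ^ (m + 1)) ^ (d + 1) := by
            rw [← pow_mul, ← pow_mul, Nat.mul_comm]
        _ ≤ (2 / δ) ^ (d + 1) := by
            apply pow_le_pow_left₀ (by positivity) key
        _ = 2 ^ (d + 1) * (1 / δ) ^ (d + 1) := by
            rw [← mul_pow]; ring_nf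
  have final : ∑ i ∈ Finset.range M, ∑ a ∈ Y i, Δ a * n a ≤
      C * 3 ^ d * 2 ^ (d + 1) * c * Real.log T * (1 / δ) ^ (d + 1) := by
    calc ∑ i ∈ Finset.range M, ∑ a ∈ Y i, Δ a * n a
        ≤ C * Real.log T * c * 3 ^ d * ∑ i ∈ Finset.range M, ((2 : ℝ) ^ (d + 1)) ^ i := hsum
      _ ≤ C * Real.log T * c * 3 ^ d * (2 ^ (d + 1) * (1 / δ) ^ (d + 1)) := by
          apply mul_le_mul_of_nonneg_left ((hgeom M).trans hM2) (by positivity)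
      _ = C * 3 ^ d * 2 ^ (d + 1) * c * Real.log T * (1 / δ) ^ (d + 1) := by ring
  linarith
end
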